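/- Let a be a sensing action for fluent f, executable in state (M,s), and suppose (M,s) is consistency preserving for a (no fully or partially observant agent believes f or believes ¬f at any world). Let (M',s') be the successor given by the step transition for sensing actions. Then: (1) if (M,s) ⊨ f then (M',s') ⊨ C_F f, and if (M,s) ⊨ ¬f then (M',s') ⊨ C_F ¬f, where F is the set of fully observant agents; and (2) for every oblivious agent i and every belief formula ψ, (M',s') ⊨ B_i ψ iff (M,s) ⊨ B_i ψ. -/

import Mathlib

/-- Belief formulae over a set of agents `A` and a set of fluents `F`:
propositional formulae extended with belief operators `B_i` (`bel`),
group knowledge `E_α` (`ebel`) and common knowledge `C_α` (`cbel`). -/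
inductive BForm (A F : Type) : Type where
  | top  : BForm A F
  | atom : F → BForm A F
  | neg  : BForm A F → BForm A F
  | conj : BForm A F → BForm A F → BForm A F
  | disj : BForm A F → BForm A F → BForm A F
  | bel  : A → BForm A F → BForm A F
  | ebel : Set A → BForm A F → BForm A F
  | cbel : Set A → BForm A F → BForm A F

/-- A Kripke structure: a valuation of fluents at each world and an
accessibility relation for each agent. -/
structure Kripke (A W F : Type) where
  val : W → F → Prop
  rel : A → W → W → Prop

/-- Iterated group operator: `Esat M α P k w` says `E_α^k P` holds at `w`. -/
def Esat {A W F : Type} (M : Kripke A W F) (α : Set A) (P : W → Prop) : ℕ → W → Prop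
  | 0, w => P w
  | k + 1, w => ∀ i ∈ α, ∀ v, M.rel i w v → Esat M α P k v

/-- Kripke satisfaction of belief formulae.  Common knowledge `C_α φ` holds at
`w` iff `E_α^k φ` holds at `w` for every `k ≥ 0`. -/
def sat {A W F : Type} (M : Kripke A W F) : W → BForm A F → Prop
  | _, .top => True
  | w, .atom f => M.val w f
  | w, .neg φ => ¬ sat M w φ
  | w, .conj φ ψ => sat M w φ ∧ sat M w ψ
  | w, .disj φ ψ => sat M w φ ∨ sat M w ψ
  | w, .bel i φ => ∀ v, M.rel i w v → sat M v φ
  | w, .ebel α φ => ∀ i ∈ α, ∀ v, M.rel i w v → sat M v φ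
  | w, .cbel α φ => ∀ k : ℕ, Esat M α (fun v => sat M v φ) k w

/-- `M` is an S5 structure: each accessibility relation is an equivalence
relation (reflexive, symmetric, transitive). -/
def S5 {A W F : Type} (M : Kripke A W F) : Prop := ∀ i, Equivalence (M.rel i)

/-- Reachability via finite paths over the union of all accessibility relations. -/
def reach {A W F : Type} (M : Kripke A W F) : W → W → Prop :=
  Relation.ReflTransGen (fun u v => ∃ i, M.rel i u v)

/-- Reachability via finite paths labeled by agents in `α` only. -/
def reachIn {A W F : Type} (M : Kripke A W F) (α : Set A) : W → W → Prop :=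
  Relation.ReflTransGen (fun u v => ∃ i ∈ α, M.rel i u v)

/-- Two pointed Kripke structures are equivalent if they satisfy the same
belief formulae. -/
def equivState {A W W' F : Type} (M : Kripke A W F) (s : W) (M' : Kripke A W' F) (s' : W') : Prop :=
  ∀ φ : BForm A F, sat M s φ ↔ sat M' s' φ

/-- Fluent (purely propositional) formulae: no modal operators. -/
def IsProp {A F : Type} : BForm A F → Prop
  | .top => True
  | .atom _ => True
  | .neg φ => IsProp φ
  | .conj φ ψ => IsProp φ ∧ IsProp ψ
  | .disj φ ψ => IsProp φ ∧ IsProp ψ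
  | .bel _ _ => False
  | .ebel _ _ => False
  | .cbel _ _ => False

/-- The successor Kripke structure after a sensing action for fluent `f`.
It is built from a disjoint replica of `M` (the `Sum.inr` worlds, restricted to
worlds where the precondition `exec` holds) glued onto the original `M`
(the `Sum.inl` worlds): in the replica only edges of fully (`Fo`) or partially
(`Po`) observant agents are kept, and `Fo`-edges additionally require the two
endpoints to agree on `f`; oblivious agents point from replica worlds back into
the original copy of `M`. -/
def senseSucc {A W F : Type} (M : Kripke A W F) (exec : W → Prop) (f : F)
    (Fo Po : Set A) : Kripke A (W ⊕ {u : W // exec u}) F where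
  val x := match x with
    | Sum.inl u => M.val u
    | Sum.inr u => M.val u.1
  rel i x y := match x, y with
    | Sum.inl u, Sum.inl v => M.rel i u v
    | Sum.inr u, Sum.inr v =>
        (i ∈ Fo ∧ M.rel i u.1 v.1 ∧ (M.val u.1 f ↔ M.val v.1 f)) ∨ (i ∈ Po ∧ M.rel i u.1 v.1)
    | Sum.inr u, Sum.inl v => i ∉ Fo ∧ i ∉ Po ∧ M.rel i u.1 v
    | Sum.inl _, Sum.inr _ => False

/-!
The embedding `Sum.inl` of the original structure into the successor is a bounded morphism, so it
preserves every formula; the oblivious agents' successors of the replica world `c(s)` are exactly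
the `Sum.inl`-images of their successors of `s`, which gives (2). For (1), a fully observant edge
inside the replica joins worlds agreeing on `f`, and (as `Fo` and `Po` are disjoint) no other edge of
a fully observant agent leaves a replica world; so the replica worlds agreeing with `s` on `f` form
an `Fo`-closed set on which `f` (or `¬f`) holds throughout.
-/

section BoundedMorphism

variable {A W W' F : Type} {M : Kripke A W F} {M' : Kripke A W' F}

structure IsBoundedMorphism (M : Kripke A W F) (M' : Kripke A W' F) (g : W → W') : Prop where
  val_iff : ∀ w p, M'.val (g w) p ↔ M.val w p
  forth : ∀ i u v, M.rel i u v → M'.rel i (g u) (g v)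
  back : ∀ i u y, M'.rel i (g u) y → ∃ v, M.rel i u v ∧ g v = y

lemma IsBoundedMorphism.forall_rel_iff {g : W → W'} (hg : IsBoundedMorphism M M' g)
    {P' : W' → Prop} {P : W → Prop} (h : ∀ v, P' (g v) ↔ P v) (i : A) (u : W) :
    (∀ y, M'.rel i (g u) y → P' y) ↔ ∀ v, M.rel i u v → P v := by
  constructor
  · intro H v hv
    exact (h v).mp (H _ (hg.forth i u v hv))
  · intro H y hy
    obtain ⟨v, hv, rfl⟩ := hg.back i u y hy
    exact (h v).mpr (H v hv)

lemma IsBoundedMorphism.esat_iff {g : W → W'} (hg : IsBoundedMorphism M M' g) (α : Set A)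
    {P' : W' → Prop} {P : W → Prop} (h : ∀ v, P' (g v) ↔ P v) :
    ∀ k u, Esat M' α P' k (g u) ↔ Esat M α P k u
  | 0, u => h u
  | k + 1, u => forall₂_congr fun i _ => hg.forall_rel_iff (hg.esat_iff α h k) i u

lemma IsBoundedMorphism.sat_iff {g : W → W'} (hg : IsBoundedMorphism M M' g) :
    ∀ (φ : BForm A F) (u : W), sat M' (g u) φ ↔ sat M u φ
  | .top, _ => Iff.rfl
  | .atom p, u => hg.val_iff u p
  | .neg φ, u => not_congr (hg.sat_iff φ u)
  | .conj φ ψ, u => and_congr (hg.sat_iff φ u) (hg.sat_iff ψ u)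
  | .disj φ ψ, u => or_congr (hg.sat_iff φ u) (hg.sat_iff ψ u)
  | .bel i φ, u => hg.forall_rel_iff (hg.sat_iff φ) i u
  | .ebel _ φ, u => forall₂_congr fun i _ => hg.forall_rel_iff (hg.sat_iff φ) i u
  | .cbel α φ, u => forall_congr' fun k => hg.esat_iff α (hg.sat_iff φ) k u

end BoundedMorphism

section Closed

variable {A W F : Type} {M : Kripke A W F} {α : Set A}

lemma esat_of_closed {P S : W → Prop} (hP : ∀ w, S w → P w)
    (hS : ∀ i ∈ α, ∀ w v, S w → M.rel i w v → S v) : ∀ k w, S w → Esat M α P k w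
  | 0, w, hw => hP w hw
  | k + 1, w, hw => fun i hi v hv => esat_of_closed hP hS k v (hS i hi w v hw hv)

lemma sat_cbel_of_closed {φ : BForm A F} {S : W → Prop} (hφ : ∀ w, S w → sat M w φ)
    (hS : ∀ i ∈ α, ∀ w v, S w → M.rel i w v → S v) {w : W} (hw : S w) :
    sat M w (.cbel α φ) :=
  fun k => esat_of_closed hφ hS k w hw

end Closed

section Sensing

variable {A W F : Type} (M : Kripke A W F) (exec : W → Prop) (f : F) (Fo Po : Set A)

lemma isBoundedMorphism_senseSucc_inl : IsBoundedMorphism M (senseSucc M exec f Fo Po) Sum.inl where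
  val_iff _ _ := Iff.rfl
  forth _ _ _ h := h
  back i u y h := by
    cases y with
    | inl v => exact ⟨v, h, rfl⟩
    | inr _ => exact h.elim

lemma sat_senseSucc_inl (φ : BForm A F) (u : W) :
    sat (senseSucc M exec f Fo Po) (Sum.inl u) φ ↔ sat M u φ :=
  (isBoundedMorphism_senseSucc_inl M exec f Fo Po).sat_iff φ u

lemma senseSucc_rel_inr_iff_of_not_mem {i : A} (hiF : i ∉ Fo) (hiP : i ∉ Po)
    (u : {u : W // exec u}) (y : W ⊕ {u : W // exec u}) :
    (senseSucc M exec f Fo Po).rel i (Sum.inr u) y ↔ ∃ v, M.rel i u.1 v ∧ Sum.inl v = y := by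
  cases y with
  | inl v => simp [senseSucc, hiF, hiP]
  | inr v => simp [senseSucc, hiF, hiP]

lemma sat_senseSucc_inr_bel_of_not_mem {i : A} (hiF : i ∉ Fo) (hiP : i ∉ Po)
    (u : {u : W // exec u}) (φ : BForm A F) :
    sat (senseSucc M exec f Fo Po) (Sum.inr u) (.bel i φ) ↔ sat M u.1 (.bel i φ) := by
  simp only [sat, senseSucc_rel_inr_iff_of_not_mem M exec f Fo Po hiF hiP]
  refine ⟨fun H v hv => ?_, fun H y ⟨v, hv, hy⟩ => hy ▸ ?_⟩
  · exact (sat_senseSucc_inl M exec f Fo Po φ v).mp (H _ ⟨v, hv, rfl⟩)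
  · exact (sat_senseSucc_inl M exec f Fo Po φ v).mpr (H v hv)

def replicaWithVal (b : Prop) (y : W ⊕ {u : W // exec u}) : Prop :=
  ∃ u : {u : W // exec u}, y = Sum.inr u ∧ (M.val u.1 f ↔ b)

lemma replicaWithVal_closed (hdisj : Disjoint Fo Po) (b : Prop) :
    ∀ i ∈ Fo, ∀ x y, replicaWithVal M exec f b x →
      (senseSucc M exec f Fo Po).rel i x y → replicaWithVal M exec f b y := by
  rintro i hi _ (v | v) ⟨u, rfl, hu⟩ hrel
  · exact absurd hi hrel.1
  · rcases hrel with ⟨-, -, hagree⟩ | ⟨hiP, -⟩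
    · exact ⟨v, rfl, hagree.symm.trans hu⟩
    · exact absurd hiP (Set.disjoint_left.mp hdisj hi)

end Sensing

theorem stmt11_general {A W F : Type} (M : Kripke A W F) (s : W)
    (exec : W → Prop) (f : F) (Fo Po : Set A)
    (hdisj : Disjoint Fo Po) (hs : exec s) :
    ((sat M s (.atom f) →
        sat (senseSucc M exec f Fo Po) (Sum.inr ⟨s, hs⟩) (.cbel Fo (.atom f))) ∧
     (sat M s (.neg (.atom f)) →
        sat (senseSucc M exec f Fo Po) (Sum.inr ⟨s, hs⟩) (.cbel Fo (.neg (.atom f))))) ∧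
    (∀ i : A, i ∉ Fo → i ∉ Po → ∀ ψ : BForm A F,
      (sat (senseSucc M exec f Fo Po) (Sum.inr ⟨s, hs⟩) (.bel i ψ) ↔
        sat M s (.bel i ψ))) := by
  have hclosed := replicaWithVal_closed M exec f Fo Po hdisj
  refine ⟨⟨fun hf => ?_, fun hnf => ?_⟩, fun i hiF hiP ψ =>
    sat_senseSucc_inr_bel_of_not_mem M exec f Fo Po hiF hiP ⟨s, hs⟩ ψ⟩
  · refine sat_cbel_of_closed ?_ (hclosed True) ⟨⟨s, hs⟩, rfl, iff_true_intro hf⟩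
    rintro _ ⟨u, rfl, hu⟩
    exact hu.mpr trivial
  · refine sat_cbel_of_closed ?_ (hclosed False) ⟨⟨s, hs⟩, rfl, iff_false_intro hnf⟩
    rintro _ ⟨u, rfl, hu⟩
    exact hu.mp

/-- For a sensing action for fluent `f`, executable in the
consistency-preserving state `(M,s)`, with disjoint fully observant group `Fo`
and partially observant group `Po` (all other agents oblivious):
(1) in the successor the group `Fo` commonly knows the actual value of `f`;
(2) the beliefs of every oblivious agent are unchanged. -/
theorem stmt11 {A W F : Type} (M : Kripke A W F) (s : W)
    (exec : W → Prop) (f : F) (Fo Po : Set A)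
    (hdisj : Disjoint Fo Po) (hs : exec s)
    (hcp : ∀ u : W, ∀ i ∈ Fo ∪ Po,
      ¬ sat M u (.disj (.bel i (.atom f)) (.bel i (.neg (.atom f))))) :
    ((sat M s (.atom f) →
        sat (senseSucc M exec f Fo Po) (Sum.inr ⟨s, hs⟩) (.cbel Fo (.atom f))) ∧
     (sat M s (.neg (.atom f)) →
        sat (senseSucc M exec f Fo Po) (Sum.inr ⟨s, hs⟩) (.cbel Fo (.neg (.atom f))))) ∧
    (∀ i : A, i ∉ Fo → i ∉ Po → ∀ ψ : BForm A F,
      (sat (senseSucc M exec f Fo Po) (Sum.inr ⟨s, hs⟩) (.bel i ψ) ↔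
        sat M s (.bel i ψ))) :=
  stmt11_general M s exec f Fo Po hdisj hs
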